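/- Let m ≥ 1 be an integer and b > 0. Define f_m(t) = cosh(9t/4) + b Σ_{k=0}^{m−1} ((k+1)/(m+1)) cosh(9kt/(4m)) and Φ_S(m;t) = 4π² f_m(t) e^{−2π cosh t}. Then lim_{t→+∞} Φ_S(m;t)/Φ(t) = 1, where Φ(t) = Σ_{n=1}^{∞} (2π² n⁴ e^{9t/4} − 3π n² e^{5t/4}) e^{−π n² e^t}. -/

import Mathlib

open Real Filter

/-- The Riemann xi kernel
`Φ(t) = ∑_{n=1}^{∞} (2π² n⁴ e^{9t/4} − 3π n² e^{5t/4}) e^{−π n² e^t}`. -/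
noncomputable def Phi (t : ℝ) : ℝ :=
  ∑' n : ℕ,
    (2 * π ^ 2 * (n + 1 : ℝ) ^ 4 * exp (9 * t / 4)
      - 3 * π * (n + 1 : ℝ) ^ 2 * exp (5 * t / 4)) * exp (-π * (n + 1 : ℝ) ^ 2 * exp t)

/-- `f_m(t) = cosh(9t/4) + b ∑_{k=0}^{m−1} ((k+1)/(m+1)) cosh(9kt/(4m))`. -/
noncomputable def fS (m : ℕ) (b t : ℝ) : ℝ :=
  cosh (9 * t / 4) +
    b * ∑ k ∈ Finset.range m, ((k + 1 : ℝ) / (m + 1 : ℝ)) * cosh (9 * k * t / (4 * m))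

/-- The approximating kernel `Φ_S(m;t) = 4π² f_m(t) e^{−2π cosh t}`. -/
noncomputable def PhiS (m : ℕ) (b t : ℝ) : ℝ :=
  4 * π ^ 2 * fS m b t * exp (-2 * π * cosh t)

/-- The main-term gauge `g(t) = 2π² e^{9t/4} e^{-π e^t}`. -/
noncomputable def gMain (t : ℝ) : ℝ := 2 * π ^ 2 * exp (9 * t / 4) * exp (-π * exp t)

/-- Normalized `n`-th term of `Φ`. -/
noncomputable def hTerm (n : ℕ) (t : ℝ) : ℝ :=
  (2 * π ^ 2 * (n + 1 : ℝ) ^ 4 - 3 * π * (n + 1 : ℝ) ^ 2 * exp (-t)) / (2 * π ^ 2)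
    * exp (-(π * ((n + 1 : ℝ) ^ 2 - 1)) * exp t)

lemma gMain_pos (t : ℝ) : 0 < gMain t := by unfold gMain; positivity

lemma term_eq (n : ℕ) (t : ℝ) :
    (2 * π ^ 2 * (n + 1 : ℝ) ^ 4 * exp (9 * t / 4)
      - 3 * π * (n + 1 : ℝ) ^ 2 * exp (5 * t / 4)) * exp (-π * (n + 1 : ℝ) ^ 2 * exp t)
    = hTerm n t * gMain t := by
  unfold hTerm gMain
  have e1 : exp (5*t/4) = exp (9*t/4) * exp (-t) := by rw [← exp_add]; ring_nf
  have e2 : exp (-π * (n+1:ℝ)^2 * exp t)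
      = exp (-(π * ((n+1:ℝ)^2 - 1)) * exp t) * exp (-π * exp t) := by rw [← exp_add]; ring_nf
  have hπ : (2*π^2 : ℝ) ≠ 0 := by positivity
  rw [e1, e2]; field_simp

noncomputable def bnd (n : ℕ) : ℝ :=
  (2 * π ^ 2 * (n + 1 : ℝ) ^ 4 + 3 * π * (n + 1 : ℝ) ^ 2) / (2 * π ^ 2)
    * exp (-(π * ((n + 1 : ℝ) ^ 2 - 1)))

lemma hTerm_bound (n : ℕ) {t : ℝ} (ht : 0 ≤ t) : |hTerm n t| ≤ bnd n := by
  have hπ : (0:ℝ) < 2 * π ^ 2 := by positivity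
  have h1 : (1:ℝ) ≤ (n + 1 : ℝ) ^ 2 := by nlinarith [Nat.cast_nonneg (α := ℝ) n]
  have het : (1:ℝ) ≤ exp t := by simpa using exp_le_exp.2 ht
  unfold hTerm bnd
  rw [abs_mul, abs_div, abs_of_pos hπ, abs_exp]
  gcongr
  · calc |2 * π ^ 2 * (n + 1 : ℝ) ^ 4 - 3 * π * (n + 1 : ℝ) ^ 2 * exp (-t)|
        ≤ |2 * π ^ 2 * (n + 1 : ℝ) ^ 4| + |3 * π * (n + 1 : ℝ) ^ 2 * exp (-t)| :=
          abs_sub _ _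
      _ ≤ 2 * π ^ 2 * (n + 1 : ℝ) ^ 4 + 3 * π * (n + 1 : ℝ) ^ 2 := by
          rw [abs_of_nonneg (by positivity), abs_of_nonneg (by positivity)]
          have hle : exp (-t) ≤ 1 := exp_le_one_iff.mpr (by linarith)
          have := mul_le_mul_of_nonneg_left hle
            (by positivity : (0:ℝ) ≤ 3 * π * ((n:ℝ) + 1) ^ 2)
          nlinarith
  · have hc : 0 ≤ π * ((n + 1 : ℝ) ^ 2 - 1) := by
      have := pi_pos; nlinarith
    nlinarith

lemma bnd_summable : Summable bnd := by
  have hr : ‖exp (-(2*π))‖ < 1 := by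
    rw [Real.norm_eq_abs, abs_exp]
    exact exp_lt_one_iff.mpr (by nlinarith [pi_pos])
  have h0 : Summable (fun n : ℕ => (n:ℝ)^4 * (exp (-(2*π)))^n) :=
    summable_pow_mul_geometric_of_norm_lt_one 4 hr
  have h1 : Summable (fun n : ℕ => ((n:ℝ)+1)^4 * (exp (-(2*π)))^(n+1)) := by
    have := h0.comp_injective (add_left_injective 1)
    simpa [Function.comp_def] using this
  have h2 : Summable (fun n : ℕ => ((2*π^2+3*π)/(2*π^2) * exp (2*π)) *
      (((n:ℝ)+1)^4 * (exp (-(2*π)))^(n+1))) := h1.mul_left _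
  refine h2.of_nonneg_of_le (fun n => ?_) (fun n => ?_)
  · unfold bnd; positivity
  · unfold bnd
    have hπ : (0:ℝ) < π := pi_pos
    have hn1 : (1:ℝ) ≤ (n:ℝ)+1 := by
      have := Nat.cast_nonneg (α := ℝ) n; linarith
    have e1 : (exp (-(2*π)))^(n+1) = exp (-(2*π*(n+1))) := by
      rw [← exp_nat_mul]; congr 1; push_cast; ring
    rw [e1]
    have key : exp (-(π * (((n:ℝ) + 1) ^ 2 - 1))) ≤ exp (2*π) * exp (-(2*π*((n:ℝ)+1))) := by
      rw [← exp_add]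
      apply exp_le_exp.2
      have h0 : (0:ℝ) ≤ π * (n:ℝ)^2 := by positivity
      nlinarith
    have c1 : (2 * π ^ 2 * ((n:ℝ) + 1) ^ 4 + 3 * π * ((n:ℝ) + 1) ^ 2) / (2 * π ^ 2)
        ≤ (2*π^2+3*π)/(2*π^2) * ((n:ℝ)+1)^4 := by
      rw [div_mul_eq_mul_div]
      apply div_le_div_of_nonneg_right ?_ (by positivity)
      have hx : (1:ℝ) ≤ ((n:ℝ)+1)^2 := by nlinarith
      have h24 : ((n:ℝ)+1)^2 ≤ ((n:ℝ)+1)^4 := by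
        nlinarith [mul_nonneg (sq_nonneg ((n:ℝ)+1)) (sub_nonneg.2 hx)]
      nlinarith
    calc (2 * π ^ 2 * ((n:ℝ) + 1) ^ 4 + 3 * π * ((n:ℝ) + 1) ^ 2) / (2 * π ^ 2)
          * exp (-(π * (((n:ℝ) + 1) ^ 2 - 1)))
        ≤ ((2*π^2+3*π)/(2*π^2) * ((n:ℝ)+1)^4) * (exp (2*π) * exp (-(2*π*((n:ℝ)+1)))) := by
          apply mul_le_mul c1 key (by positivity) (by positivity)
      _ = (2*π^2+3*π)/(2*π^2) * exp (2*π) * (((n:ℝ)+1)^4 * exp (-(2*π*((n:ℝ)+1)))) := by ring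

lemma hTerm_tendsto (n : ℕ) :
    Tendsto (fun t => hTerm n t) atTop (nhds (if n = 0 then 1 else 0)) := by
  unfold hTerm
  have hπ : (2*π^2 : ℝ) ≠ 0 := by positivity
  have hfac : Tendsto (fun t : ℝ =>
      (2 * π ^ 2 * (n + 1 : ℝ) ^ 4 - 3 * π * (n + 1 : ℝ) ^ 2 * exp (-t)) / (2 * π ^ 2))
      atTop (nhds ((2 * π ^ 2 * (n + 1 : ℝ) ^ 4) / (2 * π ^ 2))) := by
    have := tendsto_exp_neg_atTop_nhds_zero
    have h2 : Tendsto (fun t : ℝ => 2 * π ^ 2 * (n + 1 : ℝ) ^ 4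
        - 3 * π * (n + 1 : ℝ) ^ 2 * exp (-t)) atTop
        (nhds (2 * π ^ 2 * (n + 1 : ℝ) ^ 4 - 3 * π * (n + 1 : ℝ) ^ 2 * 0)) :=
      tendsto_const_nhds.sub (tendsto_const_nhds.mul this)
    have h3 := h2.div_const (2 * π ^ 2); rw [mul_zero, sub_zero] at h3; exact h3
  rcases Nat.eq_zero_or_pos n with rfl | hn
  · simp only [if_pos rfl]
    have : ∀ t : ℝ, exp (-(π * ((0 + 1 : ℝ) ^ 2 - 1)) * exp t) = 1 := by
      intro t; norm_num
    simpa [this, div_self hπ] using hfac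
  · simp only [if_neg hn.ne']
    have hc : 0 < π * ((n + 1 : ℝ) ^ 2 - 1) := by
      have h1 : (1:ℝ) ≤ (n:ℝ) := by exact_mod_cast hn
      have : (0:ℝ) < (n + 1 : ℝ) ^ 2 - 1 := by nlinarith
      exact mul_pos pi_pos this
    have hexp : Tendsto (fun t : ℝ => exp (-(π * ((n + 1 : ℝ) ^ 2 - 1)) * exp t))
        atTop (nhds 0) := by
      have hneg : Tendsto (fun t : ℝ => -(π * ((n + 1 : ℝ) ^ 2 - 1) * exp t)) atTop atBot :=
        tendsto_neg_atTop_atBot.comp (tendsto_exp_atTop.const_mul_atTop hc)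
      exact (tendsto_exp_atBot.comp hneg).congr fun t => by
        simp only [Function.comp_apply, neg_mul]
    simpa using hfac.mul hexp

lemma Phi_div_tendsto : Tendsto (fun t => Phi t / gMain t) atTop (nhds 1) := by
  have heq : ∀ t : ℝ, Phi t / gMain t = ∑' n : ℕ, hTerm n t := by
    intro t
    unfold Phi
    rw [← tsum_div_const]
    exact tsum_congr fun n => by rw [term_eq]; field_simp [(gMain_pos t).ne']
  have hlim : Tendsto (fun t => ∑' n : ℕ, hTerm n t) atTop
      (nhds (∑' n : ℕ, (if n = 0 then (1:ℝ) else 0))) := by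
    apply tendsto_tsum_of_dominated_convergence bnd_summable hTerm_tendsto
    filter_upwards [eventually_ge_atTop (0:ℝ)] with t ht n
    simpa [Real.norm_eq_abs] using hTerm_bound n ht
  rw [show (1:ℝ) = ∑' n : ℕ, (if n = 0 then (1:ℝ) else 0) from (tsum_ite_eq 0 1).symm]
  exact hlim.congr fun t => (heq t).symm

lemma PhiS_div_tendsto (m : ℕ) (hm : 1 ≤ m) (b : ℝ) :
    Tendsto (fun t => PhiS m b t / gMain t) atTop (nhds 1) := by
  have heq : ∀ t : ℝ, PhiS m b t / gMain t
      = (2 * fS m b t * exp (-(9 * t / 4))) * exp (-π * exp (-t)) := by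
    intro t
    unfold PhiS
    have e1 : exp (-2 * π * cosh t) = exp (-π * exp t) * exp (-π * exp (-t)) := by
      rw [← exp_add, Real.cosh_eq]; ring_nf
    have e2 : exp (-(9 * t / 4)) * exp (9 * t / 4) = 1 := by rw [← exp_add]; ring_nf; exact exp_zero
    rw [e1, div_eq_iff (gMain_pos t).ne']
    show _ = _ * (2 * π ^ 2 * exp (9 * t / 4) * exp (-π * exp t))
    linear_combination
      (-(4 * π ^ 2 * fS m b t * exp (-π * exp t) * exp (-π * exp (-t)))) * e2
  have h1 : Tendsto (fun t : ℝ => 2 * cosh (9 * t / 4) * exp (-(9 * t / 4))) atTop (nhds 1) := by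
    have : ∀ t : ℝ, 2 * cosh (9 * t / 4) * exp (-(9 * t / 4)) = 1 + exp (-(9 * t / 2)) := by
      intro t
      rw [Real.cosh_eq, exp_neg, exp_neg]
      rw [eq_comm]
      have h9 : exp (9*t/2) = exp (9*t/4) * exp (9*t/4) := by rw [← exp_add]; ring_nf
      field_simp [h9]
      rw [h9]; ring
    rw [show (1:ℝ) = 1 + 0 by ring]
    refine Tendsto.congr (fun t => (this t).symm) (tendsto_const_nhds.add ?_)
    have h92 : Tendsto (fun t : ℝ => 9 * t / 2) atTop atTop :=
      (tendsto_id.const_mul_atTop (by norm_num : (0:ℝ) < 9/2)).congr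
        (fun t => by simp only [id]; ring)
    exact tendsto_exp_neg_atTop_nhds_zero.comp h92
  have h2 : Tendsto (fun t : ℝ =>
      (b * ∑ k ∈ Finset.range m, ((k + 1 : ℝ) / (m + 1 : ℝ)) * cosh (9 * k * t / (4 * m)))
        * (2 * exp (-(9 * t / 4)))) atTop (nhds 0) := by
    have hsum : Tendsto (fun t : ℝ =>
        ∑ k ∈ Finset.range m, ((k + 1 : ℝ) / (m + 1 : ℝ)) * cosh (9 * k * t / (4 * m))
          * (2 * exp (-(9 * t / 4)))) atTop (nhds 0) := by
      rw [show (0:ℝ) = ∑ k ∈ Finset.range m, 0 by simp]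
      apply tendsto_finset_sum
      intro k hk
      have hkm : (k:ℝ) < m := by exact_mod_cast Finset.mem_range.mp hk
      have hm0 : (0:ℝ) < m := by positivity
      have hterm : ∀ t : ℝ, ((k + 1 : ℝ) / (m + 1 : ℝ)) * cosh (9 * k * t / (4 * m))
          * (2 * exp (-(9 * t / 4)))
          = ((k + 1 : ℝ) / (m + 1 : ℝ)) *
            (exp (-((9/4 - 9 * k / (4 * m)) * t)) + exp (-((9/4 + 9 * k / (4 * m)) * t))) := by
        intro t
        rw [Real.cosh_eq]
        have ea : exp (9 * k * t / (4 * m)) * exp (-(9 * t / 4)) = exp (-((9/4 - 9 * k / (4 * m)) * t)) := by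
          rw [← exp_add]; congr 1; field_simp; ring
        have eb : exp (-(9 * k * t / (4 * m))) * exp (-(9 * t / 4)) = exp (-((9/4 + 9 * k / (4 * m)) * t)) := by
          rw [← exp_add]; congr 1; field_simp; ring
        rw [← ea, ← eb]; ring
      have hca : (0:ℝ) < 9/4 - 9 * k / (4 * m) := by
        rw [sub_pos, div_lt_div_iff₀ (by positivity) (by norm_num)]
        nlinarith
      have hcb : (0:ℝ) < 9/4 + 9 * k / (4 * m) := by positivity
      have ha : Tendsto (fun t : ℝ => exp (-((9/4 - 9 * k / (4 * m)) * t))) atTop (nhds 0) :=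
        tendsto_exp_neg_atTop_nhds_zero.comp (tendsto_id.const_mul_atTop hca)
      have hb' : Tendsto (fun t : ℝ => exp (-((9/4 + 9 * k / (4 * m)) * t))) atTop (nhds 0) :=
        tendsto_exp_neg_atTop_nhds_zero.comp (tendsto_id.const_mul_atTop hcb)
      have := (tendsto_const_nhds (x := ((k + 1 : ℝ) / (m + 1 : ℝ))) (f := atTop)).mul (ha.add hb')
      simp only [add_zero, mul_zero] at this
      exact this.congr fun t => (hterm t).symm
    have := hsum.const_mul b
    simp only [mul_zero] at this
    refine this.congr fun t => ?_
    rw [← Finset.sum_mul, ← mul_assoc]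
  have h3 : Tendsto (fun t : ℝ => exp (-π * exp (-t))) atTop (nhds 1) := by
    have : Tendsto (fun t : ℝ => -π * exp (-t)) atTop (nhds 0) := by
      have := tendsto_exp_neg_atTop_nhds_zero.const_mul (-π)
      simpa using this
    simpa [Function.comp_def] using (Real.continuous_exp.tendsto 0).comp this
  have hmain : Tendsto (fun t : ℝ => 2 * fS m b t * exp (-(9 * t / 4))) atTop (nhds 1) := by
    have : ∀ t : ℝ, 2 * fS m b t * exp (-(9 * t / 4))
        = 2 * cosh (9 * t / 4) * exp (-(9 * t / 4))
          + (b * ∑ k ∈ Finset.range m, ((k + 1 : ℝ) / (m + 1 : ℝ)) * cosh (9 * k * t / (4 * m)))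
              * (2 * exp (-(9 * t / 4))) := by
      intro t; unfold fS; ring
    rw [show (1:ℝ) = 1 + 0 by ring]
    exact (h1.add h2).congr fun t => (this t).symm
  have := hmain.mul h3
  simp only [mul_one] at this
  exact this.congr fun t => (heq t).symm

/-- **Theorem 1(A) of the paper.** For `m ≥ 1` and `b > 0`,
`Φ_S(m;t)/Φ(t) → 1` as `t → +∞`. -/
theorem PhiS_asymptotic_Phi (m : ℕ) (hm : 1 ≤ m) (b : ℝ) (hb : 0 < b) :
    Tendsto (fun t : ℝ => PhiS m b t / Phi t) atTop (nhds 1) := by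
  have hP := Phi_div_tendsto
  have hS := PhiS_div_tendsto m hm b
  have hne : ∀ᶠ t : ℝ in atTop, Phi t ≠ 0 := by
    filter_upwards [hP.eventually_ne one_ne_zero] with t ht
    intro h0
    exact ht (by rw [h0, zero_div])
  have hdiv := hS.div hP one_ne_zero
  rw [div_one] at hdiv
  refine hdiv.congr' ?_
  filter_upwards [hne] with t ht
  simp only [Pi.div_apply]
  have hg := (gMain_pos t).ne'
  field_simp
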